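/- Assume the general counting-measure setup. Let Ψ be an approximation function, Q₂ > Q₁ ≥ 1 integers, δ ∈ (0,1) and H ≥ 1 an integer. If Θ_Ψ(Q₁,Q₂) := min_{Q₁ ≤ q < Q₂} 2Ψ(q)/q < ν_ρ(δ), then μ_H(J_Ψ(Q₁,Q₂)) ≤ 4·∫_{J_Ψ(Q₁,Q₂)} ρ + S + 4·|J_Ψ(Q₁,Q₂)|·η_ρ(Θ_Ψ(Q₁,Q₂)), where S = (8δ/(1−δ) + E(H)/(Θ_Ψ(Q₁,Q₂)·min_{[0,1]} ρ))·(|J_Ψ(Q₁,Q₂)|·η_ρ(Θ_Ψ(Q₁,Q₂)) + ∫_{J_Ψ(Q₁,Q₂)} ρ) and |·| denotes Lebesgue measure. -/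

import Mathlib

open MeasureTheory Set

noncomputable section

/-- `μ_H(A)`: the proportion of elements of `𝕏(H)` whose reduction modulo one lies in `A`. -/
def muH (X : ℕ → Finset ℝ) (H : ℕ) (A : Set ℝ) : ℝ :=
  (∑ α ∈ X H, Set.indicator A (fun _ => (1 : ℝ)) (Int.fract α)) / ((X H).card : ℝ)

def IsApproxFun (Ψ : ℝ → ℝ) : Prop :=
  (∀ x : ℝ, 0 < x → 0 < Ψ x) ∧ AntitoneOn Ψ (Set.Ioi 0) ∧
    Filter.Tendsto Ψ Filter.atTop (nhds 0)

def JPsi (Ψ : ℝ → ℝ) (Q₁ Q₂ : ℕ) : Set ℝ :=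
  ⋃ q ∈ Finset.Ico Q₁ Q₂, ⋃ p ∈ Finset.range (q + 1),
    Set.Icc ((p : ℝ) / q - Ψ q / q) ((p : ℝ) / q + Ψ q / q) ∩ Set.Icc 0 1

def Theta (Ψ : ℝ → ℝ) (Q₁ Q₂ : ℕ) : ℝ :=
  sInf ((fun q : ℕ => 2 * Ψ q / q) '' {q : ℕ | Q₁ ≤ q ∧ q < Q₂})

def etaMod (f : ℝ → ℝ) (ε : ℝ) : ℝ :=
  sInf {η : ℝ | 0 < η ∧ ∀ x ∈ Set.Icc (0 : ℝ) 1, ∀ y ∈ Set.Icc (0 : ℝ) 1,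
    |x - y| ≤ ε → |f x - f y| ≤ η}

def nuMod (f : ℝ → ℝ) (δ : ℝ) : ℝ :=
  sSup {ε : ℝ | 0 < ε ∧ etaMod f ε ≤ δ * sInf (f '' Set.Icc 0 1)}

/-!
`J = J_Ψ(Q₁,Q₂)` is a finite union of closed intervals containing `0` and `1`, so `[0,1] \ J` is a
finite disjoint union of open gaps. The discrepancy bound on `[0,1]` and on each gap gives
`μ_H(J) ≤ ∫_J ρ + N·E(H)`, `N` the number of gaps. The right end of a gap is the left end
`p/q - Ψ(q)/q` of an interval of length `2Ψ(q)/q ≥ Θ`, so consecutive gaps are at least `Θ`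
apart; as `p ≤ q` and `[0, Θ/2] ⊆ J`, every gap also stays `Θ/2` away from `0` and `1`.
Thickening the gaps by `Θ/2` on each side thus gives disjoint subintervals of `[0,1]`, whence
`|J| ≥ NΘ` and `∫_J ρ ≥ NΘ·min ρ`. Hence `μ_H(J) ≤ (1 + E(H)/(Θ·min ρ))·∫_J ρ`, which is
stronger than the claimed bound.
-/

structure IsGap (J : Set ℝ) (c d : ℝ) : Prop where
  left_mem : c ∈ J
  right_mem : d ∈ J
  lt : c < d
  disjoint : Disjoint (Ioo c d) J

namespace IsGap

variable {J : Set ℝ} {a b c d c' d' x : ℝ}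

theorem notMem (h : IsGap J c d) (hx : x ∈ Ioo c d) : x ∉ J :=
  disjoint_left.mp h.disjoint hx

theorem le_or_le_of_Icc_subset (h : IsGap J c d) (hab : a ≤ b) (hJ : Icc a b ⊆ J) :
    b ≤ c ∨ d ≤ a := by
  by_contra! ⟨hcb, had⟩
  have := h.lt
  refine h.notMem (x := (max a c + min b d) / 2) ⟨?_, ?_⟩ (hJ ⟨?_, ?_⟩) <;>
    linarith [le_max_left a c, le_max_right a c, min_le_left b d, min_le_right b d,
      max_lt had this, lt_min hcb this, le_min hab had.le, max_le hab hcb.le]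

theorem le_left_of_Icc_subset (h : IsGap J c d) (hJ : Icc a b ⊆ J) (hac : a ≤ c) : b ≤ c := by
  rcases le_or_gt a b with hab | hba
  · exact (h.le_or_le_of_Icc_subset hab hJ).resolve_right (by linarith [h.lt])
  · linarith

theorem eq_of_mem_Icc (h : IsGap J c d) (hJ : Icc a b ⊆ J) (hd : d ∈ Icc a b) : d = a :=
  le_antisymm ((h.le_or_le_of_Icc_subset (hd.1.trans hd.2) hJ).resolve_left
    (by linarith [h.lt, hd.2])) hd.1

theorem le_left_of_lt (h : IsGap J c d) (h' : IsGap J c' d') (hcc : c < c') : d ≤ c' :=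
  le_of_not_gt fun hc'd => h.notMem ⟨hcc, hc'd⟩ h'.left_mem

theorem right_unique (h : IsGap J c d) (h' : IsGap J c d') : d = d' := by
  rcases lt_trichotomy d d' with hlt | heq | hgt
  · exact absurd h.right_mem (h'.notMem ⟨h.lt, hlt⟩)
  · exact heq
  · exact absurd h'.right_mem (h.notMem ⟨h'.lt, hgt⟩)

theorem left_unique (h : IsGap J c d) (h' : IsGap J c' d) : c = c' := by
  rcases lt_trichotomy c c' with hlt | heq | hgt
  · exact absurd h'.left_mem (h.notMem ⟨hlt, h'.lt⟩)
  · exact heq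
  · exact absurd h.left_mem (h'.notMem ⟨hgt, h.lt⟩)

end IsGap

section Gaps

variable {J : Set ℝ}

theorem exists_isGap_mem_Ioo (hJ : IsClosed J) {a b x : ℝ} (ha : a ∈ J) (hb : b ∈ J)
    (hx : x ∈ Icc a b) (hxJ : x ∉ J) : ∃ c d, IsGap J c d ∧ x ∈ Ioo c d := by
  have hL : IsClosed (J ∩ Icc a x) := hJ.inter isClosed_Icc
  have hR : IsClosed (J ∩ Icc x b) := hJ.inter isClosed_Icc
  have hLb : BddAbove (J ∩ Icc a x) := bddAbove_Icc.mono inter_subset_right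
  have hRb : BddBelow (J ∩ Icc x b) := bddBelow_Icc.mono inter_subset_right
  obtain ⟨hcJ, -, hcx⟩ := hL.csSup_mem ⟨a, ha, le_rfl, hx.1⟩ hLb
  obtain ⟨hdJ, hxd, -⟩ := hR.csInf_mem ⟨b, hb, hx.2, le_rfl⟩ hRb
  have hcx' : sSup (J ∩ Icc a x) < x := hcx.lt_of_ne fun h => hxJ (h ▸ hcJ)
  have hxd' : x < sInf (J ∩ Icc x b) := hxd.lt_of_ne fun h => hxJ (h ▸ hdJ)
  refine ⟨_, _, ⟨hcJ, hdJ, hcx'.trans hxd', disjoint_left.mpr fun y hy hyJ => ?_⟩, hcx', hxd'⟩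
  rcases le_or_gt y x with hyx | hxy
  · have hac : a ≤ sSup (J ∩ Icc a x) := le_csSup hLb ⟨ha, le_rfl, hx.1⟩
    exact hy.1.not_ge (le_csSup hLb ⟨hyJ, hac.trans hy.1.le, hyx⟩)
  · have hdb : sInf (J ∩ Icc x b) ≤ b := csInf_le hRb ⟨hb, hx.2, le_rfl⟩
    exact hy.2.not_ge (csInf_le hRb ⟨hyJ, hxy.le, hy.2.le.trans hdb⟩)

theorem finite_setOf_isGap {F : Set ℝ} (hF : F.Finite)
    (hJ : ∀ x ∈ J, ∃ a ∈ F, ∃ b, x ∈ Icc a b ∧ Icc a b ⊆ J) :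
    {g : ℝ × ℝ | IsGap J g.1 g.2}.Finite := by
  refine Set.Finite.of_finite_image (f := Prod.snd) (hF.subset ?_) ?_
  · rintro _ ⟨g, hg, rfl⟩
    obtain ⟨a, ha, b, hd, hab⟩ := hJ _ hg.right_mem
    exact hg.eq_of_mem_Icc hab hd ▸ ha
  · rintro ⟨c, d⟩ hg ⟨c', d'⟩ hg' (rfl : d = d')
    rw [show c = c' from IsGap.left_unique hg hg']

theorem diff_eq_biUnion_isGap (hJ : IsClosed J) {a b : ℝ} (hJab : J ⊆ Icc a b) (ha : a ∈ J)
    (hb : b ∈ J) {s : Finset (ℝ × ℝ)} (hs : ∀ g, g ∈ s ↔ IsGap J g.1 g.2) :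
    Icc a b \ J = ⋃ g ∈ s, Ioo g.1 g.2 := by
  ext x
  simp only [mem_sdiff, mem_iUnion, exists_prop]
  constructor
  · rintro ⟨hx, hxJ⟩
    obtain ⟨c, d, hg, hxg⟩ := exists_isGap_mem_Ioo hJ ha hb hx hxJ
    exact ⟨(c, d), (hs _).2 hg, hxg⟩
  · rintro ⟨g, hg, hx⟩
    have hg := (hs g).1 hg
    exact ⟨⟨(hJab hg.left_mem).1.trans hx.1.le, hx.2.le.trans (hJab hg.right_mem).2⟩,
      hg.notMem hx⟩

theorem pairwiseDisjoint_thickening_of_isGap {s : Set (ℝ × ℝ)} {r : ℝ}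
    (hs : ∀ g ∈ s, IsGap J g.1 g.2)
    (hsep : ∀ g ∈ s, ∀ g' ∈ s, g.1 < g'.1 → g.2 + 2 * r ≤ g'.1) :
    s.PairwiseDisjoint fun g => Ioo (g.1 - r) (g.2 + r) := by
  have key : ∀ g ∈ s, ∀ g' ∈ s, g.1 < g'.1 →
      Disjoint (Ioo (g.1 - r) (g.2 + r)) (Ioo (g'.1 - r) (g'.2 + r)) := fun g hg g' hg' hlt =>
    disjoint_left.mpr fun x hx hx' => by linarith [hx.2, hx'.1, hsep g hg g' hg' hlt]
  intro g hg g' hg' hne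
  rcases lt_trichotomy g.1 g'.1 with hlt | heq | hgt
  · exact key g hg g' hg' hlt
  · exact absurd (Prod.ext heq ((hs g hg).right_unique (heq ▸ hs g' hg'))) hne
  · exact (key g' hg' g hg hgt).symm

theorem pairwiseDisjoint_Ioo_of_isGap {s : Set (ℝ × ℝ)}
    (hs : ∀ g ∈ s, IsGap J g.1 g.2) : s.PairwiseDisjoint fun g => Ioo g.1 g.2 := by
  simpa using pairwiseDisjoint_thickening_of_isGap (r := 0) hs fun g hg g' hg' hlt => by
    simpa using (hs g hg).le_left_of_lt (hs g' hg') hlt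

end Gaps

theorem card_mul_le_measureReal_of_pairwiseDisjoint {J K : Set ℝ} {s : Finset (ℝ × ℝ)} {θ : ℝ}
    (hθ : 0 ≤ θ) (hJ : volume J ≠ ⊤) (hK : volume K ≠ ⊤) (hs : ∀ g ∈ s, g.1 ≤ g.2)
    (hdisj : (s : Set (ℝ × ℝ)).PairwiseDisjoint fun g => Ioo (g.1 - θ / 2) (g.2 + θ / 2))
    (hsub : ∀ g ∈ s, Ioo (g.1 - θ / 2) (g.2 + θ / 2) ⊆ K)
    (hcover : K ⊆ J ∪ ⋃ g ∈ s, Ioo g.1 g.2) :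
    s.card * θ ≤ volume.real J := by
  have hthick : ∑ g ∈ s, (g.2 - g.1 + θ) ≤ volume.real K := calc
    ∑ g ∈ s, (g.2 - g.1 + θ) = volume.real (⋃ g ∈ s, Ioo (g.1 - θ / 2) (g.2 + θ / 2)) := by
      rw [measureReal_biUnion_finset hdisj (fun _ _ => measurableSet_Ioo)
        fun _ _ => measure_Ioo_lt_top.ne]
      refine Finset.sum_congr rfl fun g hg => ?_
      rw [Real.volume_real_Ioo_of_le (by linarith [hs g hg])]
      ring
    _ ≤ volume.real K := measureReal_mono (iUnion₂_subset hsub) hK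
  have hcov : volume.real K ≤ volume.real J + ∑ g ∈ s, (g.2 - g.1) := calc
    volume.real K ≤ volume.real (J ∪ ⋃ g ∈ s, Ioo g.1 g.2) :=
      measureReal_mono hcover (measure_union_lt_top hJ.lt_top
        (measure_biUnion_lt_top s.finite_toSet fun _ _ => measure_Ioo_lt_top)).ne
    _ ≤ volume.real J + ∑ g ∈ s, volume.real (Ioo g.1 g.2) :=
      (measureReal_union_le _ _).trans (add_le_add le_rfl (measureReal_biUnion_finset_le _ _))
    _ = volume.real J + ∑ g ∈ s, (g.2 - g.1) := by
      rw [Finset.sum_congr rfl fun g hg => Real.volume_real_Ioo_of_le (hs g hg)]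
  rw [Finset.sum_add_distrib, Finset.sum_const, nsmul_eq_mul] at hthick
  linarith

theorem card_mul_le_measureReal_of_isGap {J : Set ℝ} {θ : ℝ} (hθ : 0 ≤ θ) (hJ : J ⊆ Icc 0 1)
    (hleft : Icc 0 (min (θ / 2) 1) ⊆ J)
    (hright : ∀ c d, IsGap J c d → d + θ / 2 ≤ 1 ∧ Icc d (min (d + θ) 1) ⊆ J)
    {s : Finset (ℝ × ℝ)} (hs : ∀ g ∈ s, IsGap J g.1 g.2)
    (hG : Icc 0 1 \ J = ⋃ g ∈ s, Ioo g.1 g.2) :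
    s.card * θ ≤ volume.real J := by
  have hleft_gap : ∀ g ∈ s, θ / 2 ≤ g.1 := fun g hg => by
    have hg := hs g hg
    have := hg.le_left_of_Icc_subset hleft (hJ hg.left_mem).1
    have := (hJ hg.right_mem).2
    have := hg.lt
    rcases min_cases (θ / 2) 1 with ⟨h, _⟩ | ⟨h, _⟩ <;> linarith
  have hsep : ∀ g ∈ s, ∀ g' ∈ s, g.1 < g'.1 → g.2 + 2 * (θ / 2) ≤ g'.1 :=
    fun g hg g' hg' hlt => by
      have hg := hs g hg
      have hg' := hs g' hg'
      have := hg'.le_left_of_Icc_subset (hright _ _ hg).2 (hg.le_left_of_lt hg' hlt)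
      have := (hJ hg'.right_mem).2
      have := hg'.lt
      rcases min_cases (g.2 + θ) 1 with ⟨h, _⟩ | ⟨h, _⟩ <;> linarith
  refine card_mul_le_measureReal_of_pairwiseDisjoint (K := Icc 0 1) hθ
    (measure_ne_top_of_subset hJ measure_Icc_lt_top.ne) measure_Icc_lt_top.ne
    (fun g hg => (hs g hg).lt.le) (pairwiseDisjoint_thickening_of_isGap hs hsep)
    (fun g hg x hx => ⟨by linarith [hx.1, hleft_gap g hg],
      by linarith [hx.2, (hright _ _ (hs g hg)).1]⟩) ?_
  rw [← hG, union_sdiff_self]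
  exact subset_union_right

section muH

variable (X : ℕ → Finset ℝ) (H : ℕ)

theorem muH_biUnion_finset {ι : Type*} (s : Finset ι) {A : ι → Set ℝ}
    (hA : (s : Set ι).PairwiseDisjoint A) :
    muH X H (⋃ i ∈ s, A i) = ∑ i ∈ s, muH X H (A i) := by
  simp only [muH, ← Finset.sum_div, Finset.indicator_biUnion_apply s A hA]
  rw [Finset.sum_comm]

theorem muH_union {A B : Set ℝ} (hAB : Disjoint A B) :
    muH X H (A ∪ B) = muH X H A + muH X H B := by
  simp only [muH, ← add_div, ← Finset.sum_add_distrib, indicator_union_of_disjoint hAB]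

theorem muH_Icc_zero_one (hX : (X H).Nonempty) : muH X H (Icc 0 1) = 1 := by
  have hfract : ∀ α : ℝ, (Icc (0 : ℝ) 1).indicator (fun _ => (1 : ℝ)) (Int.fract α) = 1 :=
    fun α => indicator_of_mem (mem_Icc.mpr ⟨Int.fract_nonneg α, (Int.fract_lt_one α).le⟩) _
  simp only [muH, hfract, Finset.sum_const, nsmul_eq_mul, mul_one]
  exact div_self (Nat.cast_ne_zero.mpr hX.card_pos.ne')

theorem muH_le_setIntegral_add_card_mul {ρ : ℝ → ℝ} {e : ℝ} (hX : (X H).Nonempty)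
    (hρ : IntegrableOn ρ (Icc 0 1)) (hρ1 : ∫ x in Icc 0 1, ρ x = 1)
    (he : ∀ I : Set ℝ, I ⊆ Icc 0 1 → I.OrdConnected → |muH X H I - ∫ x in I, ρ x| ≤ e)
    {J : Set ℝ} (hJ : MeasurableSet J) (hJ01 : J ⊆ Icc 0 1) {s : Finset (ℝ × ℝ)}
    (hdisj : (s : Set (ℝ × ℝ)).PairwiseDisjoint fun g => Ioo g.1 g.2)
    (hG : Icc 0 1 \ J = ⋃ g ∈ s, Ioo g.1 g.2) :
    muH X H J ≤ (∫ x in J, ρ x) + s.card * e := by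
  have hsub : ∀ g ∈ s, Ioo g.1 g.2 ⊆ Icc 0 1 := fun g hg x hx => by
    have hx' : x ∈ ⋃ g ∈ s, Ioo g.1 g.2 := mem_iUnion₂.mpr ⟨g, hg, hx⟩
    rw [← hG] at hx'
    exact hx'.1
  have hμ : muH X H J + ∑ g ∈ s, muH X H (Ioo g.1 g.2) = 1 := by
    rw [← muH_biUnion_finset X H s hdisj, ← hG, ← muH_union X H disjoint_sdiff_right,
      union_sdiff_cancel hJ01, muH_Icc_zero_one X H hX]
  have hν : (∫ x in J, ρ x) + ∑ g ∈ s, ∫ x in Ioo g.1 g.2, ρ x = 1 := by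
    have hsplit := setIntegral_union (μ := volume) (f := fun x => ρ x) disjoint_sdiff_right
      (measurableSet_Icc.diff hJ) (hρ.mono_set hJ01) (hρ.mono_set sdiff_subset)
    rw [union_sdiff_cancel hJ01, hρ1, hG,
      integral_biUnion_finset s (fun _ _ => measurableSet_Ioo) hdisj
        fun g hg => hρ.mono_set (hsub g hg)] at hsplit
    exact hsplit.symm
  have hgap : ∑ g ∈ s, ((∫ x in Ioo g.1 g.2, ρ x) - e) ≤ ∑ g ∈ s, muH X H (Ioo g.1 g.2) :=
    Finset.sum_le_sum fun g hg => by
      linarith [(abs_le.mp (he _ (hsub g hg) ordConnected_Ioo)).1]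
  rw [Finset.sum_sub_distrib, Finset.sum_const, nsmul_eq_mul] at hgap
  linarith

end muH

theorem sInf_image_Icc_pos {f : ℝ → ℝ} {a b : ℝ} (hab : a ≤ b) (hf : ContinuousOn f (Icc a b))
    (hpos : ∀ x ∈ Icc a b, 0 < f x) : 0 < sInf (f '' Icc a b) := by
  obtain ⟨x, hx, hfx⟩ :=
    (isCompact_Icc.image_of_continuousOn hf).sInf_mem ((nonempty_Icc.mpr hab).image f)
  exact hfx ▸ hpos x hx

theorem sInf_image_Icc_mul_measureReal_le_setIntegral {f : ℝ → ℝ} {a b : ℝ}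
    (hf : ContinuousOn f (Icc a b)) {J : Set ℝ} (hJ : MeasurableSet J) (hJab : J ⊆ Icc a b) :
    sInf (f '' Icc a b) * volume.real J ≤ ∫ x in J, f x :=
  setIntegral_ge_of_const_le_real hJ (measure_ne_top_of_subset hJab measure_Icc_lt_top.ne)
    (fun _ hx => csInf_le (isCompact_Icc.image_of_continuousOn hf).bddBelow
      (mem_image_of_mem f (hJab hx)))
    (hf.integrableOn_Icc.mono_set hJab)

section JPsi

variable {Ψ : ℝ → ℝ} {Q₁ Q₂ : ℕ}

theorem Theta_le {q : ℕ} (h₁ : Q₁ ≤ q) (h₂ : q < Q₂) : Theta Ψ Q₁ Q₂ ≤ 2 * Ψ q / q :=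
  csInf_le ((finite_Ico Q₁ Q₂).image _).bddBelow (mem_image_of_mem _ ⟨h₁, h₂⟩)

theorem Theta_pos (hΨ : ∀ x : ℝ, 0 < x → 0 < Ψ x) (hQ₁ : 1 ≤ Q₁) (hQ : Q₁ < Q₂) :
    0 < Theta Ψ Q₁ Q₂ := by
  have hmem : Theta Ψ Q₁ Q₂ ∈ (fun q : ℕ => 2 * Ψ q / q) '' Ico Q₁ Q₂ :=
    Set.Nonempty.csInf_mem ⟨_, mem_image_of_mem _ ⟨le_rfl, hQ⟩⟩ ((finite_Ico Q₁ Q₂).image _)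
  obtain ⟨q, ⟨hq, -⟩, hΘ⟩ := hmem
  have hq : (0 : ℝ) < q := by exact_mod_cast hQ₁.trans hq
  rw [← hΘ]
  have := hΨ q hq
  positivity

theorem mem_JPsi {x : ℝ} :
    x ∈ JPsi Ψ Q₁ Q₂ ↔ ∃ q ∈ Finset.Ico Q₁ Q₂, ∃ p ∈ Finset.range (q + 1),
      x ∈ Icc (max ((p : ℝ) / q - Ψ q / q) 0) (min ((p : ℝ) / q + Ψ q / q) 1) := by
  simp only [JPsi, mem_iUnion, Icc_inter_Icc, exists_prop]

theorem Icc_subset_JPsi {q p : ℕ} (hq : q ∈ Finset.Ico Q₁ Q₂) (hp : p ∈ Finset.range (q + 1)) :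
    Icc (max ((p : ℝ) / q - Ψ q / q) 0) (min ((p : ℝ) / q + Ψ q / q) 1) ⊆ JPsi Ψ Q₁ Q₂ :=
  fun _ hx => mem_JPsi.mpr ⟨q, hq, p, hp, hx⟩

theorem JPsi_subset_Icc : JPsi Ψ Q₁ Q₂ ⊆ Icc 0 1 :=
  iUnion₂_subset fun _ _ => iUnion₂_subset fun _ _ => inter_subset_right

theorem isClosed_JPsi : IsClosed (JPsi Ψ Q₁ Q₂) :=
  isClosed_biUnion_finset fun _ _ => isClosed_biUnion_finset fun _ _ =>
    isClosed_Icc.inter isClosed_Icc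

theorem one_mem_JPsi (hΨ : ∀ x : ℝ, 0 < x → 0 < Ψ x) (hQ₁ : 1 ≤ Q₁) (hQ : Q₁ < Q₂) :
    (1 : ℝ) ∈ JPsi Ψ Q₁ Q₂ := by
  have hq : (0 : ℝ) < Q₁ := by exact_mod_cast hQ₁
  have hr : 0 < Ψ Q₁ / Q₁ := div_pos (hΨ _ hq) hq
  refine mem_JPsi.mpr ⟨Q₁, Finset.mem_Ico.mpr ⟨le_rfl, hQ⟩, Q₁, Finset.self_mem_range_succ _, ?_⟩
  rw [div_self hq.ne']
  exact ⟨max_le (by linarith) zero_le_one, le_min (by linarith) le_rfl⟩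

theorem Icc_zero_half_Theta_subset_JPsi (hΨ : ∀ x : ℝ, 0 < x → 0 < Ψ x) (hQ₁ : 1 ≤ Q₁)
    (hQ : Q₁ < Q₂) : Icc 0 (min (Theta Ψ Q₁ Q₂ / 2) 1) ⊆ JPsi Ψ Q₁ Q₂ := by
  have hq : (0 : ℝ) < Q₁ := by exact_mod_cast hQ₁
  have hr : 0 < Ψ Q₁ / Q₁ := div_pos (hΨ _ hq) hq
  have hΘ := Theta_le (Ψ := Ψ) le_rfl hQ
  rw [mul_div_assoc] at hΘ
  have hI := Icc_subset_JPsi (Ψ := Ψ) (p := 0) (Finset.mem_Ico.mpr ⟨le_rfl, hQ⟩)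
    (Finset.mem_range.mpr Q₁.succ_pos)
  rw [Nat.cast_zero, zero_div, zero_sub, zero_add, max_eq_right (by linarith)] at hI
  exact (Icc_subset_Icc_right (min_le_min_right 1 (by linarith))).trans hI

theorem IsGap.exists_eq_JPsi_left {c d : ℝ} (h : IsGap (JPsi Ψ Q₁ Q₂) c d) :
    ∃ q ∈ Finset.Ico Q₁ Q₂, ∃ p ∈ Finset.range (q + 1), d = (p : ℝ) / q - Ψ q / q := by
  obtain ⟨q, hq, p, hp, hd⟩ := mem_JPsi.mp h.right_mem
  have hda := h.eq_of_mem_Icc (Icc_subset_JPsi hq hp) hd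
  have hd0 : 0 < d := (JPsi_subset_Icc h.left_mem).1.trans_lt h.lt
  refine ⟨q, hq, p, hp, ?_⟩
  rcases max_cases ((p : ℝ) / q - Ψ q / q) 0 with ⟨hmax, -⟩ | ⟨hmax, -⟩ <;> rw [hmax] at hda
  · exact hda
  · linarith

theorem IsGap.add_half_Theta_le_one {c d : ℝ} (h : IsGap (JPsi Ψ Q₁ Q₂) c d) :
    d + Theta Ψ Q₁ Q₂ / 2 ≤ 1 := by
  obtain ⟨q, hq, p, hp, rfl⟩ := h.exists_eq_JPsi_left
  have hΘ := Theta_le (Ψ := Ψ) (Finset.mem_Ico.mp hq).1 (Finset.mem_Ico.mp hq).2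
  have hpq : (p : ℝ) / q ≤ 1 :=
    div_le_one_of_le₀ (by exact_mod_cast Finset.mem_range_succ_iff.mp hp) q.cast_nonneg
  rw [mul_div_assoc] at hΘ
  linarith

theorem IsGap.Icc_add_Theta_subset_JPsi {c d : ℝ} (h : IsGap (JPsi Ψ Q₁ Q₂) c d) :
    Icc d (min (d + Theta Ψ Q₁ Q₂) 1) ⊆ JPsi Ψ Q₁ Q₂ := by
  obtain ⟨q, hq, p, hp, hd⟩ := h.exists_eq_JPsi_left
  have hd0 : 0 < d := (JPsi_subset_Icc h.left_mem).1.trans_lt h.lt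
  have hΘ := Theta_le (Ψ := Ψ) (Finset.mem_Ico.mp hq).1 (Finset.mem_Ico.mp hq).2
  rw [mul_div_assoc] at hΘ
  refine (Icc_subset_Icc (max_le hd.ge hd0.le) (min_le_min_right 1 ?_)).trans
    (Icc_subset_JPsi hq hp)
  linarith

theorem finite_setOf_isGap_JPsi : {g : ℝ × ℝ | IsGap (JPsi Ψ Q₁ Q₂) g.1 g.2}.Finite := by
  refine finite_setOf_isGap (F := ⋃ q ∈ Finset.Ico Q₁ Q₂, ⋃ p ∈ Finset.range (q + 1),
    {max ((p : ℝ) / q - Ψ q / q) 0}) (Set.toFinite _) fun x hx => ?_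
  obtain ⟨q, hq, p, hp, hx⟩ := mem_JPsi.mp hx
  exact ⟨_, mem_iUnion₂.mpr ⟨q, hq, mem_iUnion₂.mpr ⟨p, hp, rfl⟩⟩, _, hx, Icc_subset_JPsi hq hp⟩

theorem exists_isGap_cover_JPsi (hΨ : ∀ x : ℝ, 0 < x → 0 < Ψ x) (hQ₁ : 1 ≤ Q₁) (hQ : Q₁ < Q₂) :
    ∃ s : Finset (ℝ × ℝ), (∀ g ∈ s, IsGap (JPsi Ψ Q₁ Q₂) g.1 g.2) ∧
      Icc 0 1 \ JPsi Ψ Q₁ Q₂ = ⋃ g ∈ s, Ioo g.1 g.2 ∧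
      s.card * Theta Ψ Q₁ Q₂ ≤ volume.real (JPsi Ψ Q₁ Q₂) := by
  have hleft := Icc_zero_half_Theta_subset_JPsi hΨ hQ₁ hQ
  have hs : ∀ g, g ∈ finite_setOf_isGap_JPsi.toFinset ↔ IsGap (JPsi Ψ Q₁ Q₂) g.1 g.2 :=
    fun g => Set.Finite.mem_toFinset _
  have hG := diff_eq_biUnion_isGap isClosed_JPsi JPsi_subset_Icc
    (hleft ⟨le_rfl, le_min (by linarith [Theta_pos hΨ hQ₁ hQ]) zero_le_one⟩)
    (one_mem_JPsi hΨ hQ₁ hQ) hs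
  refine ⟨_, fun g hg => (hs g).mp hg, hG, ?_⟩
  exact card_mul_le_measureReal_of_isGap (Theta_pos hΨ hQ₁ hQ).le JPsi_subset_Icc hleft
    (fun _ _ h => ⟨h.add_half_Theta_le_one, h.Icc_add_Theta_subset_JPsi⟩)
    (fun g hg => (hs g).mp hg) hG

end JPsi

theorem stmt10_general
    (X : ℕ → Finset ℝ) (hX : ∀ H : ℕ, 1 ≤ H → (X H).Nonempty)
    (ρ : ℝ → ℝ) (hρc : ContinuousOn ρ (Set.Icc 0 1))
    (hρpos : ∀ x ∈ Set.Icc (0 : ℝ) 1, 0 < ρ x)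
    (hρ1 : (∫ x in (0 : ℝ)..1, ρ x) = 1)
    (E : ℕ → ℝ) (hE0 : ∀ H, 0 ≤ E H)
    (hE : ∀ H : ℕ, 1 ≤ H → ∀ I : Set ℝ, I ⊆ Set.Icc 0 1 → I.OrdConnected →
      |muH X H I - ∫ x in I, ρ x| ≤ E H)
    (Ψ : ℝ → ℝ) (hΨ : IsApproxFun Ψ)
    (Q₁ Q₂ : ℕ) (hQ₁ : 1 ≤ Q₁) (hQ : Q₁ < Q₂)
    (δ : ℝ) (hδ : δ ∈ Set.Ioo (0 : ℝ) 1) (H : ℕ) (hH : 1 ≤ H) :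
    muH X H (JPsi Ψ Q₁ Q₂) ≤
      4 * (∫ x in JPsi Ψ Q₁ Q₂, ρ x) +
      (8 * δ / (1 - δ) + E H / (Theta Ψ Q₁ Q₂ * sInf (ρ '' Set.Icc 0 1))) *
        ((volume (JPsi Ψ Q₁ Q₂)).toReal * etaMod ρ (Theta Ψ Q₁ Q₂) +
          ∫ x in JPsi Ψ Q₁ Q₂, ρ x) +
      4 * (volume (JPsi Ψ Q₁ Q₂)).toReal * etaMod ρ (Theta Ψ Q₁ Q₂) := by
  obtain ⟨s, hs, hG, hcount⟩ := exists_isGap_cover_JPsi hΨ.1 hQ₁ hQ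
  set J := JPsi Ψ Q₁ Q₂
  set Θ := Theta Ψ Q₁ Q₂
  set m₀ := sInf (ρ '' Icc 0 1)
  have hJm : MeasurableSet J := isClosed_JPsi.measurableSet
  have hdisc : muH X H J ≤ (∫ x in J, ρ x) + s.card * E H :=
    muH_le_setIntegral_add_card_mul X H (hX H hH) hρc.integrableOn_Icc
      (by rwa [integral_Icc_eq_integral_Ioc, ← intervalIntegral.integral_of_le zero_le_one])
      (hE H hH) hJm JPsi_subset_Icc (pairwiseDisjoint_Ioo_of_isGap hs) hG
  have hmass : m₀ * volume.real J ≤ ∫ x in J, ρ x :=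
    sInf_image_Icc_mul_measureReal_le_setIntegral hρc hJm JPsi_subset_Icc
  have hm₀ : 0 < m₀ := sInf_image_Icc_pos zero_le_one hρc hρpos
  have hΘm₀ : 0 < Θ * m₀ := mul_pos (Theta_pos hΨ.1 hQ₁ hQ) hm₀
  have hEH := hE0 H
  have hcard : s.card * E H ≤ E H / (Θ * m₀) * ∫ x in J, ρ x := by
    rw [div_mul_eq_mul_div, le_div_iff₀ hΘm₀]
    calc s.card * E H * (Θ * m₀) = E H * (m₀ * (s.card * Θ)) := by ring
      _ ≤ E H * (m₀ * volume.real J) := by gcongr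
      _ ≤ E H * ∫ x in J, ρ x := by gcongr
  obtain ⟨hδ0, hδ1⟩ := hδ
  have hρJ : 0 ≤ ∫ x in J, ρ x :=
    setIntegral_nonneg hJm fun x hx => (hρpos x (JPsi_subset_Icc hx)).le
  have hVη : 0 ≤ (volume J).toReal * etaMod ρ Θ :=
    mul_nonneg ENNReal.toReal_nonneg (Real.sInf_nonneg fun _ h => h.1.le)
  have hδ' : 0 ≤ 8 * δ / (1 - δ) := div_nonneg (by linarith) (by linarith)
  have hEΘ : 0 ≤ E H / (Θ * m₀) := div_nonneg hEH hΘm₀.le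
  calc muH X H J ≤ (∫ x in J, ρ x) + E H / (Θ * m₀) * ∫ x in J, ρ x := by linarith
    _ ≤ _ := by nlinarith [mul_nonneg (add_nonneg hδ' hEΘ) hVη, mul_nonneg hδ' hρJ]

theorem stmt10
    (X : ℕ → Finset ℝ) (hX : ∀ H : ℕ, 1 ≤ H → (X H).Nonempty)
    (ρ : ℝ → ℝ) (hρc : ContinuousOn ρ (Set.Icc 0 1))
    (hρpos : ∀ x ∈ Set.Icc (0 : ℝ) 1, 0 < ρ x)
    (hρ1 : (∫ x in (0 : ℝ)..1, ρ x) = 1)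
    (E : ℕ → ℝ) (hE0 : ∀ H, 0 ≤ E H)
    (hE : ∀ H : ℕ, 1 ≤ H → ∀ I : Set ℝ, I ⊆ Set.Icc 0 1 → I.OrdConnected →
      |muH X H I - ∫ x in I, ρ x| ≤ E H)
    (Ψ : ℝ → ℝ) (hΨ : IsApproxFun Ψ)
    (Q₁ Q₂ : ℕ) (hQ₁ : 1 ≤ Q₁) (hQ : Q₁ < Q₂)
    (δ : ℝ) (hδ : δ ∈ Set.Ioo (0 : ℝ) 1) (H : ℕ) (hH : 1 ≤ H)
    (hΘ : Theta Ψ Q₁ Q₂ < nuMod ρ δ) :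
    muH X H (JPsi Ψ Q₁ Q₂) ≤
      4 * (∫ x in JPsi Ψ Q₁ Q₂, ρ x) +
      (8 * δ / (1 - δ) + E H / (Theta Ψ Q₁ Q₂ * sInf (ρ '' Set.Icc 0 1))) *
        ((volume (JPsi Ψ Q₁ Q₂)).toReal * etaMod ρ (Theta Ψ Q₁ Q₂) +
          ∫ x in JPsi Ψ Q₁ Q₂, ρ x) +
      4 * (volume (JPsi Ψ Q₁ Q₂)).toReal * etaMod ρ (Theta Ψ Q₁ Q₂) :=
  stmt10_general X hX ρ hρc hρpos hρ1 E hE0 hE Ψ hΨ Q₁ Q₂ hQ₁ hQ δ hδ H hH
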